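/- With the notation of the parametrized Hamiltonian system: for pairwise distinct constants a_1,…,a_n, define H_i = (x^i)²·Σ_j p_j² − Σ_{j≠i} (a_i/(a_i−a_j))·(x^i p_j − x^j p_i)². Then Σ_i H_i/(1+s·a_i) = K(s)·L(s) + M(s)² = H(s) for all s with 1+s·a_i ≠ 0 for all i. -/

import Mathlib

open Finset

/-! The coefficients of the `H_i` pair up through the partial fraction identity
`a_i / ((a_i - a_j)(1 + s a_i)) + a_j / ((a_j - a_i)(1 + s a_j)) = 1 / ((1 + s a_i)(1 + s a_j))`.
Writing both sides of the theorem as double sums over `(i, j)`, it therefore suffices to compare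
the `(i, j)` and `(j, i)` entries together, and this is an identity of rational functions. -/

theorem Finset.sum_sum_eq_of_add_swap {ι M : Type*} [Fintype ι] [AddCommMonoid M]
    [IsAddTorsionFree M] {f g : ι → ι → M} (h : ∀ i j, f i j + f j i = g i j + g j i) :
    ∑ i, ∑ j, f i j = ∑ i, ∑ j, g i j := by
  have two_nsmul_eq (F : ι → ι → M) : 2 • ∑ i, ∑ j, F i j = ∑ i, ∑ j, (F i j + F j i) := by
    simp only [two_nsmul, sum_add_distrib]
    rw [sum_comm (f := fun i j => F j i)]
  apply nsmul_right_injective two_ne_zero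
  simp only [two_nsmul_eq, h]

theorem div_sub_div_one_add_mul_add_swap {K : Type*} [Field K] {a b s : K} (hab : a ≠ b)
    (ha : 1 + s * a ≠ 0) (hb : 1 + s * b ≠ 0) :
    a / (a - b) / (1 + s * a) + b / (b - a) / (1 + s * b) = 1 / ((1 + s * a) * (1 + s * b)) := by
  have hab' : a - b ≠ 0 := sub_ne_zero.mpr hab
  rw [← neg_sub a b, div_neg, neg_div, ← sub_eq_add_neg, div_sub_div _ _ ha hb]
  congr 1
  field_simp
  ring

theorem stmt2 {n : ℕ} (a : Fin n → ℝ) (hdist : ∀ i j, i ≠ j → a i ≠ a j)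
    (s : ℝ) (hs : ∀ i, 1 + s * a i ≠ 0) (x p : Fin n → ℝ) :
    (∑ i, ((x i) ^ 2 * ∑ j, (p j) ^ 2
        - ∑ j ∈ Finset.univ.erase i,
            (a i / (a i - a j)) * (x i * p j - x j * p i) ^ 2) / (1 + s * a i))
      = (∑ i, (x i) ^ 2 / (1 + s * a i)) * (∑ i, s * a i * (p i) ^ 2 / (1 + s * a i))
        + (∑ i, p i * x i / (1 + s * a i)) ^ 2 := by
  have lhs_eq : ∀ i, ((x i) ^ 2 * ∑ j, (p j) ^ 2
      - ∑ j ∈ Finset.univ.erase i, (a i / (a i - a j)) * (x i * p j - x j * p i) ^ 2)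
        / (1 + s * a i)
      = ∑ j, ((x i) ^ 2 * (p j) ^ 2 / (1 + s * a i)
          - a i / (a i - a j) / (1 + s * a i) * (x i * p j - x j * p i) ^ 2) := by
    intro i
    rw [sum_erase _ (by simp), mul_sum, ← sum_sub_distrib, sum_div]
    congr! 1 with j
    ring
  rw [sum_congr rfl fun i _ => lhs_eq i, sq (∑ i, _), sum_mul_sum, sum_mul_sum,
    ← sum_add_distrib]
  simp only [← sum_add_distrib]
  refine sum_sum_eq_of_add_swap fun i j => ?_
  obtain rfl | hij := eq_or_ne i j
  · have := hs i
    field_simp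
    ring
  · have hpair := div_sub_div_one_add_mul_add_swap (hdist i j hij) (hs i) (hs j)
    have := hs i
    have := hs j
    calc _ = (x i) ^ 2 * (p j) ^ 2 / (1 + s * a i) + (x j) ^ 2 * (p i) ^ 2 / (1 + s * a j)
          - (a i / (a i - a j) / (1 + s * a i) + a j / (a j - a i) / (1 + s * a j))
            * (x i * p j - x j * p i) ^ 2 := by ring
      _ = _ := by
        rw [hpair]
        field_simp
        ring
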